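/- arXiv:2209.09896 — 3 statements merged into one kernel-verified Lean document; each statement's English description precedes it below -/
import Mathlib

section
/- Let M_1, …, M_k be matroids on pairwise disjoint finite ground sets E_1, …, E_k with rank functions r_1, …, r_k, and let M be their direct sum on E = E_1 ∪ … ∪ E_k, with rank function r (so r(S) = Σ_{i=1}^k r_i(S ∩ E_i)). Then the correlation gap of r equals the minimum over i ∈ [k] of the correlation gap of r_i: CG(r) = min_{i∈[k]} CG(r_i). -/
open scoped BigOperators Classical

/-- Multilinear extension of a set function: `F(x) = Σ_{S⊆E} f(S) Π_{i∈S} x_i Π_{i∉S} (1−x_i)`. -/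
noncomputable def multilinearExt {E : Type*} [Fintype E] (f : Finset E → ℝ) (x : E → ℝ) : ℝ :=
  ∑ S : Finset E, f S * ((∏ i ∈ S, x i) * ∏ i ∈ Sᶜ, (1 - x i))

/-- Concave extension of a set function: the maximum of `Σ_S λ_S f(S)` over probability
distributions `λ` on subsets with marginals `x`. -/
noncomputable def concaveExt {E : Type*} [Fintype E] (f : Finset E → ℝ) (x : E → ℝ) : ℝ :=
  sSup { v : ℝ | ∃ lam : Finset E → ℝ,
    (∀ S, 0 ≤ lam S) ∧ (∑ S : Finset E, lam S) = 1 ∧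
    (∀ i : E, (∑ S ∈ Finset.univ.filter (fun S : Finset E => i ∈ S), lam S) = x i) ∧
    v = ∑ S : Finset E, lam S * f S }

/-- The ratio `F(x)/f̂(x)` with the convention that it equals `1` when `f̂(x) = 0`. -/
noncomputable def cgRatio {E : Type*} [Fintype E] (f : Finset E → ℝ) (x : E → ℝ) : ℝ :=
  if concaveExt f x = 0 then 1 else multilinearExt f x / concaveExt f x

/-- The correlation gap `CG(f) = inf_{x ∈ [0,1]^E} F(x)/f̂(x)`. -/
noncomputable def corrGap {E : Type*} [Fintype E] (f : Finset E → ℝ) : ℝ :=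
  sInf { v : ℝ | ∃ x : E → ℝ, (∀ i, 0 ≤ x i ∧ x i ≤ 1) ∧ v = cgRatio f x }

/-- A matroid on a finite ground set `E`, given by its independent sets. -/
structure FinMatroid (E : Type*) where
  Indep : Finset E → Prop
  indep_empty : Indep ∅
  indep_subset : ∀ ⦃S T : Finset E⦄, Indep T → S ⊆ T → Indep S
  indep_aug : ∀ ⦃S T : Finset E⦄, Indep S → Indep T → S.card < T.card →
    ∃ i ∈ T, i ∉ S ∧ Indep (insert i S)

/-- Rank function of a matroid: `r(S) = max{|T| : T ⊆ S, T independent}`. -/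
noncomputable def FinMatroid.rank {E : Type*} (M : FinMatroid E) (S : Finset E) : ℕ :=
  (S.powerset.filter (fun T => M.Indep T)).sup Finset.card

/-- Weighted rank function: `r_w(S) = max{ Σ_{i∈T} w_i : T ⊆ S, T independent }`. -/
noncomputable def FinMatroid.wRank {E : Type*} (M : FinMatroid E) (w : E → ℝ)
    (S : Finset E) : ℝ :=
  sSup { v : ℝ | ∃ T : Finset E, T ⊆ S ∧ M.Indep T ∧ v = ∑ i ∈ T, w i }

/-- Girth of a matroid: the smallest size of a dependent set. -/
noncomputable def FinMatroid.girth {E : Type*} (M : FinMatroid E) : ℕ :=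
  sInf { n : ℕ | ∃ S : Finset E, ¬ M.Indep S ∧ S.card = n }

/-!
Write `r S = ∑ i, r_i (S ∩ E_i)`. Under the product distribution with marginals `x` the parts
`S ∩ E_i` are independent, each distributed as the product distribution of `x|E_i`, so the
multilinear extension is additive: `F x = ∑ i, F_i (x|E_i)`. The concave extension is
subadditive, `f̂ x ≤ ∑ i, f̂_i (x|E_i)`, because projecting a distribution with marginals `x`
onto `E_i` gives one with marginals `x|E_i`. Hence `F x ≥ ∑ i, CG(r_i) f̂_i (x|E_i) ≥
(min_i CG(r_i)) f̂ x`. Conversely, for `x` supported on a single summand `E_j` both extensions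
of `r` coincide with those of `r_j`, so `CG(r) ≤ CG(r_j)`.
-/

open Finset

section SetFunction

variable {α β : Type*} [Fintype α] [Fintype β]

/-- The probability that the random set containing each `a` independently with probability
`x a` equals `S`. -/
noncomputable def prodWeight (x : α → ℝ) (S : Finset α) : ℝ :=
  (∏ a ∈ S, x a) * ∏ a ∈ Sᶜ, (1 - x a)

lemma multilinearExt_eq_sum_prodWeight (f : Finset α → ℝ) (x : α → ℝ) :
    multilinearExt f x = ∑ S, f S * prodWeight x S := rfl

lemma prodWeight_eq_prod_ite (x : α → ℝ) (S : Finset α) :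
    prodWeight x S = ∏ a, if a ∈ S then x a else 1 - x a := by
  rw [prod_ite, prodWeight]
  congr <;> ext <;> simp

lemma prodWeight_nonneg {x : α → ℝ} (hx : ∀ a, 0 ≤ x a ∧ x a ≤ 1) (S : Finset α) :
    0 ≤ prodWeight x S :=
  mul_nonneg (prod_nonneg fun a _ => (hx a).1) (prod_nonneg fun a _ => sub_nonneg.2 (hx a).2)

lemma sum_prodWeight (x : α → ℝ) : ∑ S, prodWeight x S = 1 := by
  simpa [prodWeight, compl_eq_univ_sdiff] using (prod_add x (fun a => 1 - x a) univ).symm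

lemma multilinearExt_zero (f : Finset α → ℝ) : multilinearExt f 0 = f ∅ := by
  rw [multilinearExt_eq_sum_prodWeight, sum_eq_single ∅]
  · simp [prodWeight]
  · intro S _ hS
    obtain ⟨a, ha⟩ := nonempty_iff_ne_empty.2 hS
    simp [prodWeight, prod_eq_zero ha]
  · simp

lemma multilinearExt_nonneg {f : Finset α → ℝ} (hf : ∀ S, 0 ≤ f S) {x : α → ℝ}
    (hx : ∀ a, 0 ≤ x a ∧ x a ≤ 1) : 0 ≤ multilinearExt f x :=
  sum_nonneg fun S _ => mul_nonneg (hf S) (prodWeight_nonneg hx S)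

lemma multilinearExt_sum {ι : Type*} (s : Finset ι) (f : ι → Finset α → ℝ) (x : α → ℝ) :
    multilinearExt (fun S => ∑ i ∈ s, f i S) x = ∑ i ∈ s, multilinearExt (f i) x := by
  simp_rw [multilinearExt_eq_sum_prodWeight, sum_mul]
  exact sum_comm

/-- The feasible points of the program defining `concaveExt`. -/
def IsMarginalDist (lam : Finset α → ℝ) (x : α → ℝ) : Prop :=
  (∀ S, 0 ≤ lam S) ∧ ∑ S, lam S = 1 ∧ ∀ a, ∑ S ∈ univ.filter (fun S => a ∈ S), lam S = x a

namespace IsMarginalDist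

variable {lam : Finset α → ℝ} {x : α → ℝ}

lemma le_one (h : IsMarginalDist lam x) (S : Finset α) : lam S ≤ 1 :=
  h.2.1 ▸ single_le_sum (fun T _ => h.1 T) (mem_univ S)

lemma le_apply (h : IsMarginalDist lam x) {S : Finset α} {a : α} (ha : a ∈ S) : lam S ≤ x a :=
  h.2.2 a ▸ single_le_sum (fun T _ => h.1 T) (mem_filter.2 ⟨mem_univ S, ha⟩)

lemma sum_mul_le_concaveExt (h : IsMarginalDist lam x) (f : Finset α → ℝ) :
    ∑ S, lam S * f S ≤ concaveExt f x := by
  refine le_csSup ⟨∑ S, |f S|, ?_⟩ ⟨lam, h.1, h.2.1, h.2.2, rfl⟩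
  rintro _ ⟨mu, hmu, hmu1, hmux, rfl⟩
  refine sum_le_sum fun S _ => ?_
  calc mu S * f S ≤ mu S * |f S| := mul_le_mul_of_nonneg_left (le_abs_self _) (hmu S)
    _ ≤ 1 * |f S| :=
      mul_le_mul_of_nonneg_right (IsMarginalDist.le_one ⟨hmu, hmu1, hmux⟩ S) (abs_nonneg _)
    _ = |f S| := one_mul _

end IsMarginalDist

lemma concaveExt_le {f : Finset α → ℝ} {x : α → ℝ} {c : ℝ} (hc : 0 ≤ c)
    (h : ∀ lam, IsMarginalDist lam x → ∑ S, lam S * f S ≤ c) : concaveExt f x ≤ c :=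
  Real.sSup_le (by rintro _ ⟨lam, h1, h2, h3, rfl⟩; exact h lam ⟨h1, h2, h3⟩) hc

lemma concaveExt_nonneg {f : Finset α → ℝ} (hf : ∀ S, 0 ≤ f S) (x : α → ℝ) :
    0 ≤ concaveExt f x :=
  Real.sSup_nonneg <| by
    rintro _ ⟨lam, hlam, -, -, rfl⟩
    exact sum_nonneg fun S _ => mul_nonneg (hlam S) (hf S)

lemma concaveExt_zero {f : Finset α → ℝ} (hf : f ∅ = 0) : concaveExt f 0 = 0 := by
  have hval : ∀ lam, IsMarginalDist lam 0 → ∑ S, lam S * f S = 0 := by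
    intro lam h
    refine sum_eq_zero fun S _ => ?_
    obtain rfl | ⟨a, ha⟩ := S.eq_empty_or_nonempty
    · rw [hf, mul_zero]
    · rw [le_antisymm ((h.le_apply ha).trans_eq (Pi.zero_apply a)) (h.1 S), zero_mul]
  refine le_antisymm (concaveExt_le le_rfl fun lam h => (hval lam h).le) (Real.sSup_nonneg ?_)
  rintro _ ⟨lam, h1, h2, h3, rfl⟩
  exact (hval lam ⟨h1, h2, h3⟩).ge

noncomputable def distMap (φ : Finset α → Finset β) (lam : Finset α → ℝ) (T : Finset β) : ℝ :=
  ∑ S ∈ univ.filter (fun S => φ S = T), lam S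

lemma sum_distMap_mul (φ : Finset α → Finset β) (lam : Finset α → ℝ) (g : Finset β → ℝ) :
    ∑ T, distMap φ lam T * g T = ∑ S, lam S * g (φ S) := by
  simp_rw [distMap, sum_mul]
  rw [← sum_fiberwise univ φ (fun S => lam S * g (φ S))]
  exact sum_congr rfl fun T _ => sum_congr rfl fun S hS => by rw [(mem_filter.1 hS).2]

lemma IsMarginalDist.distMap {lam : Finset α → ℝ} {x : α → ℝ} (h : IsMarginalDist lam x)
    (φ : Finset α → Finset β) {y : β → ℝ}
    (hy : ∀ b, ∑ S ∈ univ.filter (fun S => b ∈ φ S), lam S = y b) :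
    IsMarginalDist (distMap φ lam) y := by
  refine ⟨fun T => sum_nonneg fun S _ => h.1 S, ?_, fun b => ?_⟩
  · simpa [h.2.1] using sum_distMap_mul φ lam 1
  · rw [← hy b]
    simpa [sum_filter, mul_ite] using sum_distMap_mul φ lam (fun T => if b ∈ T then 1 else 0)

lemma cgRatio_zero {f : Finset α → ℝ} (hf : f ∅ = 0) : cgRatio f 0 = 1 :=
  if_pos (concaveExt_zero hf)

lemma zero_mem_cube {γ : Type*} : ∀ a : γ, 0 ≤ (0 : γ → ℝ) a ∧ (0 : γ → ℝ) a ≤ 1 :=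
  fun _ => ⟨le_rfl, zero_le_one⟩

lemma cgRatio_nonneg {f : Finset α → ℝ} (hf : ∀ S, 0 ≤ f S) {x : α → ℝ}
    (hx : ∀ a, 0 ≤ x a ∧ x a ≤ 1) : 0 ≤ cgRatio f x := by
  unfold cgRatio
  split
  · exact zero_le_one
  · exact div_nonneg (multilinearExt_nonneg hf hx) (concaveExt_nonneg hf x)

lemma corrGap_nonneg {f : Finset α → ℝ} (hf : ∀ S, 0 ≤ f S) : 0 ≤ corrGap f :=
  Real.sInf_nonneg <| by rintro _ ⟨x, hx, rfl⟩; exact cgRatio_nonneg hf hx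

lemma corrGap_le_cgRatio {f : Finset α → ℝ} (hf : ∀ S, 0 ≤ f S) {x : α → ℝ}
    (hx : ∀ a, 0 ≤ x a ∧ x a ≤ 1) : corrGap f ≤ cgRatio f x :=
  csInf_le ⟨0, by rintro _ ⟨y, hy, rfl⟩; exact cgRatio_nonneg hf hy⟩ ⟨x, hx, rfl⟩

lemma corrGap_le_one {f : Finset α → ℝ} (hf : ∀ S, 0 ≤ f S) (hf0 : f ∅ = 0) :
    corrGap f ≤ 1 :=
  (corrGap_le_cgRatio hf zero_mem_cube).trans_eq (cgRatio_zero hf0)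

lemma le_corrGap {f : Finset α → ℝ} {c : ℝ}
    (h : ∀ x : α → ℝ, (∀ a, 0 ≤ x a ∧ x a ≤ 1) → c ≤ cgRatio f x) : c ≤ corrGap f :=
  le_csInf ⟨_, 0, zero_mem_cube, rfl⟩ (by rintro _ ⟨x, hx, rfl⟩; exact h x hx)

lemma corrGap_mul_concaveExt_le {f : Finset α → ℝ} (hf : ∀ S, 0 ≤ f S) {x : α → ℝ}
    (hx : ∀ a, 0 ≤ x a ∧ x a ≤ 1) : corrGap f * concaveExt f x ≤ multilinearExt f x := by
  obtain h0 | hpos := (concaveExt_nonneg hf x).eq_or_lt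
  · rw [← h0, mul_zero]
    exact multilinearExt_nonneg hf hx
  · have := corrGap_le_cgRatio hf hx
    rwa [cgRatio, if_neg hpos.ne', le_div_iff₀ hpos] at this

lemma le_corrGap_of_mul_concaveExt_le {f : Finset α → ℝ} (hf : ∀ S, 0 ≤ f S) {c : ℝ}
    (hc : c ≤ 1)
    (h : ∀ x : α → ℝ, (∀ a, 0 ≤ x a ∧ x a ≤ 1) → c * concaveExt f x ≤ multilinearExt f x) :
    c ≤ corrGap f := by
  refine le_corrGap fun x hx => ?_
  obtain h0 | hpos := (concaveExt_nonneg hf x).eq_or_lt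
  · rwa [cgRatio, if_pos h0.symm]
  · rw [cgRatio, if_neg hpos.ne', le_div_iff₀ hpos]
    exact h x hx

end SetFunction

lemma sum_mul_prod_eq_of_sum_eq_one {ι : Type*} [Fintype ι] [DecidableEq ι] {κ : ι → Type*}
    [∀ i, Fintype (κ i)] (μ : ∀ i, κ i → ℝ) (i : ι) (hμ : ∀ j ≠ i, ∑ t, μ j t = 1)
    (h : κ i → ℝ) :
    ∑ p : (∀ j, κ j), h (p i) * ∏ j, μ j (p j) = ∑ t, h t * μ i t := by
  set ν := Function.update μ i (fun t => h t * μ i t)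
  have hν : ∀ j ∈ ({i}ᶜ : Finset ι), ν j = μ j :=
    fun j hj => Function.update_of_ne (by simpa using hj) _ _
  have hprod : ∀ p : (∀ j, κ j), ∏ j, ν j (p j) = h (p i) * ∏ j, μ j (p j) := by
    intro p
    rw [Fintype.prod_eq_mul_prod_compl i, Fintype.prod_eq_mul_prod_compl i,
      prod_congr rfl fun j hj => by rw [hν j hj]]
    simp [ν, mul_assoc]
  have hsum : ∏ j, ∑ t, ν j t = ∑ t, h t * μ i t := by
    rw [Fintype.prod_eq_mul_prod_compl i,
      prod_eq_one fun j hj => by rw [hν j hj, hμ j (by simpa using hj)]]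
    simp [ν]
  simp_rw [← hprod, ← hsum, Fintype.prod_sum]

section DirectSum

variable {ι : Type*} [DecidableEq ι] {E : ι → Type*}

noncomputable def sigmaSingle (j : ι) (y : E j → ℝ) : (Σ i, E i) → ℝ :=
  fun s => (Pi.single j y : ∀ i, E i → ℝ) s.1 s.2

@[simp] lemma sigmaSingle_mk_self (j : ι) (y : E j → ℝ) (a : E j) :
    sigmaSingle j y ⟨j, a⟩ = y a := by
  simp [sigmaSingle]

@[simp] lemma sigmaSingle_mk_of_ne {i j : ι} (hij : i ≠ j) (y : E j → ℝ) (a : E i) :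
    sigmaSingle j y ⟨i, a⟩ = 0 := by
  simp [sigmaSingle, Pi.single_eq_of_ne hij]

lemma sigmaSingle_mem_cube {j : ι} {y : E j → ℝ} (hy : ∀ a, 0 ≤ y a ∧ y a ≤ 1) :
    ∀ s, 0 ≤ sigmaSingle j y s ∧ sigmaSingle j y s ≤ 1 := by
  rintro ⟨i, a⟩
  obtain rfl | hij := eq_or_ne i j
  · simpa using hy a
  · simp [hij]

variable [∀ i, Fintype (E i)]

noncomputable def sigmaComponent (i : ι) (S : Finset (Σ i, E i)) : Finset (E i) :=
  univ.filter fun a => ⟨i, a⟩ ∈ S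

@[simp] lemma mem_sigmaComponent {i : ι} {S : Finset (Σ i, E i)} {a : E i} :
    a ∈ sigmaComponent i S ↔ ⟨i, a⟩ ∈ S := by
  simp [sigmaComponent]

lemma sigmaComponent_map_sigmaMk (j : ι) (T : Finset (E j)) :
    sigmaComponent j (T.map (Function.Embedding.sigmaMk j)) = T := by
  ext a
  simp

lemma sigmaComponent_map_sigmaMk_of_ne {i j : ι} (hij : i ≠ j) (T : Finset (E j)) :
    sigmaComponent i (T.map (Function.Embedding.sigmaMk j)) = ∅ := by
  ext a
  simp [hij.symm]

variable [Fintype ι]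

@[simp] lemma sigmaComponent_sigma (p : ∀ i, Finset (E i)) (i : ι) :
    sigmaComponent i (univ.sigma p) = p i := by
  ext a
  simp

noncomputable def finsetSigmaEquivPi : Finset (Σ i, E i) ≃ ∀ i, Finset (E i) where
  toFun S i := sigmaComponent i S
  invFun p := univ.sigma p
  left_inv S := by ext ⟨i, a⟩; simp
  right_inv p := by ext i a; simp

lemma prodWeight_sigma (x : (Σ i, E i) → ℝ) (S : Finset (Σ i, E i)) :
    prodWeight x S = ∏ i, prodWeight (fun a => x ⟨i, a⟩) (sigmaComponent i S) := by
  simp_rw [prodWeight_eq_prod_ite, Fintype.prod_sigma, mem_sigmaComponent]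
  congr!

lemma multilinearExt_comp_sigmaComponent (i : ι) (g : Finset (E i) → ℝ)
    (x : (Σ i, E i) → ℝ) :
    multilinearExt (fun S => g (sigmaComponent i S)) x =
      multilinearExt g (fun a => x ⟨i, a⟩) := by
  simp_rw [multilinearExt_eq_sum_prodWeight, prodWeight_sigma,
    ← finsetSigmaEquivPi.symm.sum_comp]
  simpa [finsetSigmaEquivPi] using sum_mul_prod_eq_of_sum_eq_one
    (fun j => prodWeight (fun a => x ⟨j, a⟩)) i (fun j _ => sum_prodWeight _) g

variable (g : ∀ i, Finset (E i) → ℝ)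

lemma multilinearExt_sum_comp_sigmaComponent (x : (Σ i, E i) → ℝ) :
    multilinearExt (fun S => ∑ i, g i (sigmaComponent i S)) x =
      ∑ i, multilinearExt (g i) (fun a => x ⟨i, a⟩) := by
  rw [multilinearExt_sum]
  exact sum_congr rfl fun i _ => multilinearExt_comp_sigmaComponent i (g i) x

variable {g}

/-- Projecting a distribution feasible for `x` onto `E i` gives one feasible for `x|E_i`. -/
lemma concaveExt_sum_comp_sigmaComponent_le (hg : ∀ i S, 0 ≤ g i S) (x : (Σ i, E i) → ℝ) :
    concaveExt (fun S => ∑ i, g i (sigmaComponent i S)) x ≤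
      ∑ i, concaveExt (g i) (fun a => x ⟨i, a⟩) := by
  refine concaveExt_le (sum_nonneg fun i _ => concaveExt_nonneg (hg i) _) fun lam h => ?_
  simp_rw [mul_sum]
  rw [sum_comm]
  refine sum_le_sum fun i _ => ?_
  rw [← sum_distMap_mul]
  refine (h.distMap (sigmaComponent i) fun a => ?_).sum_mul_le_concaveExt (g i)
  rw [← h.2.2 ⟨i, a⟩]
  congr! 2
  simp

section Single

variable (hg : ∀ i S, 0 ≤ g i S) (hg0 : ∀ i, g i ∅ = 0) {j : ι} (y : E j → ℝ)
include hg0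

lemma multilinearExt_sum_comp_sigmaComponent_single :
    multilinearExt (fun S => ∑ i, g i (sigmaComponent i S)) (sigmaSingle j y) =
      multilinearExt (g j) y := by
  rw [multilinearExt_sum_comp_sigmaComponent, sum_eq_single j]
  · exact congrArg _ (funext (sigmaSingle_mk_self j y))
  · intro i _ hij
    rw [show (fun a => sigmaSingle j y ⟨i, a⟩) = 0 from funext (sigmaSingle_mk_of_ne hij y),
      multilinearExt_zero, hg0]
  · simp

include hg

lemma concaveExt_sum_comp_sigmaComponent_single :
    concaveExt (fun S => ∑ i, g i (sigmaComponent i S)) (sigmaSingle j y) =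
      concaveExt (g j) y := by
  set r : Finset (Σ i, E i) → ℝ := fun S => ∑ i, g i (sigmaComponent i S)
  apply le_antisymm
  · refine (concaveExt_sum_comp_sigmaComponent_le hg _).trans_eq ?_
    rw [sum_eq_single j]
    · exact congrArg _ (funext (sigmaSingle_mk_self j y))
    · intro i _ hij
      rw [show (fun a => sigmaSingle j y ⟨i, a⟩) = 0 from funext (sigmaSingle_mk_of_ne hij y),
        concaveExt_zero (hg0 i)]
    · simp
  · refine concaveExt_le (concaveExt_nonneg (fun S => sum_nonneg fun i _ => hg i _) _)
      fun lam h => ?_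
    have hr : ∀ T, r (T.map (Function.Embedding.sigmaMk j)) = g j T := by
      intro T
      refine (sum_eq_single j (fun i _ hij => ?_) (by simp)).trans ?_
      · rw [sigmaComponent_map_sigmaMk_of_ne hij, hg0]
      · rw [sigmaComponent_map_sigmaMk]
    simp_rw [← hr]
    rw [← sum_distMap_mul]
    refine (h.distMap _ fun ⟨i, a⟩ => ?_).sum_mul_le_concaveExt r
    obtain rfl | hij := eq_or_ne i j
    · simpa using h.2.2 a
    · simp [hij, hij.symm]

lemma cgRatio_sum_comp_sigmaComponent_single :
    cgRatio (fun S => ∑ i, g i (sigmaComponent i S)) (sigmaSingle j y) =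
      cgRatio (g j) y := by
  rw [cgRatio, cgRatio, concaveExt_sum_comp_sigmaComponent_single hg hg0,
    multilinearExt_sum_comp_sigmaComponent_single hg0]

end Single

theorem corrGap_sum_comp_sigmaComponent [Nonempty ι] (hg : ∀ i S, 0 ≤ g i S)
    (hg0 : ∀ i, g i ∅ = 0) :
    corrGap (fun S => ∑ i, g i (sigmaComponent i S)) = ⨅ i, corrGap (g i) := by
  have hr : ∀ S, 0 ≤ ∑ i, g i (sigmaComponent i S) := fun S => sum_nonneg fun i _ => hg i _
  have hbdd : BddBelow (Set.range fun i => corrGap (g i)) :=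
    ⟨0, by rintro _ ⟨i, rfl⟩; exact corrGap_nonneg (hg i)⟩
  apply le_antisymm
  · refine le_ciInf fun j => le_corrGap fun y hy => ?_
    rw [← cgRatio_sum_comp_sigmaComponent_single hg hg0]
    exact corrGap_le_cgRatio hr (sigmaSingle_mem_cube hy)
  · have hle : ∀ i, ⨅ i, corrGap (g i) ≤ corrGap (g i) := ciInf_le hbdd
    refine le_corrGap_of_mul_concaveExt_le hr
      ((hle (Classical.arbitrary ι)).trans (corrGap_le_one (hg _) (hg0 _))) fun x hx => ?_
    calc (⨅ i, corrGap (g i)) * concaveExt (fun S => ∑ i, g i (sigmaComponent i S)) x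
        ≤ (⨅ i, corrGap (g i)) * ∑ i, concaveExt (g i) (fun a => x ⟨i, a⟩) :=
          mul_le_mul_of_nonneg_left (concaveExt_sum_comp_sigmaComponent_le hg x)
            (Real.iInf_nonneg fun i => corrGap_nonneg (hg i))
      _ ≤ ∑ i, corrGap (g i) * concaveExt (g i) (fun a => x ⟨i, a⟩) := by
          rw [mul_sum]
          exact sum_le_sum fun i _ =>
            mul_le_mul_of_nonneg_right (hle i) (concaveExt_nonneg (hg i) _)
      _ ≤ ∑ i, multilinearExt (g i) (fun a => x ⟨i, a⟩) :=
          sum_le_sum fun i _ => corrGap_mul_concaveExt_le (hg i) fun a => hx _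
      _ = multilinearExt (fun S => ∑ i, g i (sigmaComponent i S)) x :=
          (multilinearExt_sum_comp_sigmaComponent g x).symm

end DirectSum

lemma FinMatroid.rank_empty {α : Type*} (M : FinMatroid α) : M.rank ∅ = 0 := by
  simp [FinMatroid.rank]

theorem corrGap_directSum_general {k : ℕ} (hk : 0 < k) (E : Fin k → Type*) [∀ i, Fintype (E i)]
    (Mi : ∀ i, FinMatroid (E i)) (M : FinMatroid (Σ i, E i))
    (hrank : ∀ S : Finset (Σ i, E i),
      M.rank S = ∑ i : Fin k,
        (Mi i).rank (Finset.univ.filter (fun a : E i => Sigma.mk i a ∈ S))) :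
    corrGap (fun S => (M.rank S : ℝ)) =
      ⨅ i : Fin k, corrGap (fun S => ((Mi i).rank S : ℝ)) := by
  have : Nonempty (Fin k) := ⟨⟨0, hk⟩⟩
  have hM : (fun S => (M.rank S : ℝ)) =
      fun S => ∑ i, ((Mi i).rank (sigmaComponent i S) : ℝ) := by
    funext S
    rw [hrank S]
    push_cast
    -- the two filters differ only in their decidability instances
    congr! 3
  rw [hM]
  exact corrGap_sum_comp_sigmaComponent (g := fun i S => ((Mi i).rank S : ℝ))
    (fun i S => Nat.cast_nonneg _) (fun i => by simp [FinMatroid.rank_empty])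

/-- If `M` is the direct sum of matroids `M_1, …, M_k` on pairwise disjoint
ground sets (modelled here as the components of a sigma type), then the correlation gap of
its rank function equals the minimum of the correlation gaps of the rank functions of the
summands. -/
theorem corrGap_directSum {k : ℕ} (hk : 0 < k) (E : Fin k → Type*) [∀ i, Fintype (E i)]
    (Mi : ∀ i, FinMatroid (E i)) (M : FinMatroid (Σ i, E i))
    (hdirect : ∀ S : Finset (Σ i, E i),
      M.Indep S ↔ ∀ i : Fin k,
        (Mi i).Indep (Finset.univ.filter (fun a : E i => Sigma.mk i a ∈ S)))
    (hrank : ∀ S : Finset (Σ i, E i),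
      M.rank S = ∑ i : Fin k,
        (Mi i).rank (Finset.univ.filter (fun a : E i => Sigma.mk i a ∈ S))) :
    corrGap (fun S => (M.rank S : ℝ)) =
      ⨅ i : Fin k, corrGap (fun S => ((Mi i).rank S : ℝ)) :=
  corrGap_directSum_general hk E Mi M hrank
end

section
/- Let E be a finite ground set, E' ⊆ E nonempty, and let φ: ℕ → ℝ_{≥0} be normalized, nondecreasing and concave (φ(0) = 0, φ(1) = 1, φ(i+1) ≥ φ(i) and φ(i+1) − φ(i) ≥ φ(i+2) − φ(i+1) for all i ∈ ℕ). Define f: 2^E → ℝ_{≥0} by f(S) = φ(|S ∩ E'|) and let F be its multilinear extension. For x ∈ [0,1]^E, define x̄ ∈ [0,1]^E by x̄_i = x(E')/|E'| if i ∈ E' and x̄_i = x_i otherwise. Then F(x) ≥ F(x̄). -/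
open scoped BigOperators Classical

/-!
For `i ≠ j` in `E'`, `f` is symmetric in `i, j` and, by concavity of `φ`, satisfies
`f(T + i + j) + f(T) ≤ f(T + i) + f(T + j)`. Hence, with the other coordinates fixed, `F` is
`A + B (x_i + x_j) + C x_i x_j` with `C ≤ 0`, so moving `x_i` and `x_j` towards each other with
fixed sum does not increase `F`. Each such move can set one coordinate of `E'` above the average
`x(E')/|E'|` to the average while taking another one from below, and finitely many moves reach `x̄`.
-/

open Finset Function

theorem prod_erase_one_sub_update {E : Type*} [DecidableEq E] (s : Finset E) (x : E → ℝ) (i : E)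
    (c : ℝ) :
    ∏ k ∈ s.erase i, (1 - update x i c k) = ∏ k ∈ s.erase i, (1 - x k) :=
  prod_congr rfl fun k hk => by rw [update_of_ne (ne_of_mem_erase hk)]

section MultilinearExtension

variable {E : Type*} [Fintype E]

theorem sum_finset_eq_sum_powerset_erase (i : E) (g : Finset E → ℝ) :
    ∑ S : Finset E, g S = ∑ S ∈ (univ.erase i).powerset, (g S + g (insert i S)) := by
  rw [← powerset_univ, ← insert_erase (mem_univ i), sum_powerset_insert (notMem_erase i _),
    erase_insert (notMem_erase i _), sum_add_distrib]

theorem prod_mul_prod_compl_update_of_notMem {i : E} {S : Finset E} (hi : i ∉ S) (x : E → ℝ)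
    (c : ℝ) :
    (∏ k ∈ S, update x i c k) * ∏ k ∈ Sᶜ, (1 - update x i c k)
      = (1 - c) * ((∏ k ∈ S, x k) * ∏ k ∈ Sᶜ.erase i, (1 - x k)) := by
  rw [prod_update_of_notMem hi, ← mul_prod_erase _ _ (mem_compl.2 hi), update_self,
    prod_erase_one_sub_update]
  ring

theorem prod_insert_mul_prod_compl_update_of_notMem {i : E} {S : Finset E} (hi : i ∉ S) (x : E → ℝ)
    (c : ℝ) :
    (∏ k ∈ insert i S, update x i c k) * ∏ k ∈ (insert i S)ᶜ, (1 - update x i c k)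
      = c * ((∏ k ∈ S, x k) * ∏ k ∈ Sᶜ.erase i, (1 - x k)) := by
  rw [prod_insert hi, prod_update_of_notMem hi, update_self, compl_insert,
    prod_erase_one_sub_update]
  ring

theorem multilinearExt_update (f : Finset E → ℝ) (x : E → ℝ) (i : E) (c : ℝ) :
    multilinearExt f (update x i c)
      = (1 - c) * multilinearExt (fun S => f (S.erase i)) x
        + c * multilinearExt (fun S => f (insert i S)) x := by
  simp only [multilinearExt, sum_finset_eq_sum_powerset_erase i, mul_sum, ← sum_add_distrib]
  refine sum_congr rfl fun S hS => ?_
  have hi : i ∉ S := fun h => notMem_erase i univ (mem_powerset.1 hS h)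
  have hx₀ := prod_mul_prod_compl_update_of_notMem hi x (x i)
  have hx₁ := prod_insert_mul_prod_compl_update_of_notMem hi x (x i)
  rw [update_eq_self] at hx₀ hx₁
  rw [prod_mul_prod_compl_update_of_notMem hi, prod_insert_mul_prod_compl_update_of_notMem hi,
    hx₀, hx₁, erase_insert hi, erase_eq_of_notMem hi, insert_idem]
  ring

theorem multilinearExt_add (f g : Finset E → ℝ) (x : E → ℝ) :
    multilinearExt (fun S => f S + g S) x = multilinearExt f x + multilinearExt g x := by
  simp only [multilinearExt, add_mul, sum_add_distrib]

theorem multilinearExt_mono {f g : Finset E → ℝ} (hfg : ∀ S, f S ≤ g S) {x : E → ℝ}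
    (hx : ∀ k, x k ∈ Set.Icc 0 1) : multilinearExt f x ≤ multilinearExt g x :=
  sum_le_sum fun S _ => mul_le_mul_of_nonneg_right (hfg S) <|
    mul_nonneg (prod_nonneg fun k _ => (hx k).1) (prod_nonneg fun k _ => sub_nonneg.2 (hx k).2)

theorem multilinearExt_update_update_le {f : Finset E → ℝ} {i j : E} (hij : i ≠ j)
    (hsymm : ∀ T, i ∉ T → j ∉ T → f (insert i T) = f (insert j T))
    (hsub : ∀ T, i ∉ T → j ∉ T →
      f (insert i (insert j T)) + f T ≤ f (insert i T) + f (insert j T))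
    {y : E → ℝ} (hy : ∀ k, y k ∈ Set.Icc 0 1) {p q : ℝ} (hsum : p + q = y i + y j)
    (hprod : y i * y j ≤ p * q) :
    multilinearExt f (update (update y i p) j q) ≤ multilinearExt f y := by
  set u₀₀ := multilinearExt (fun S => f ((S.erase i).erase j)) y
  set u₁₀ := multilinearExt (fun S => f (insert i ((S.erase i).erase j))) y
  set u₀₁ := multilinearExt (fun S => f (insert j ((S.erase i).erase j))) y
  set u₁₁ := multilinearExt (fun S => f (insert i (insert j ((S.erase i).erase j)))) y
  have hi : ∀ S : Finset E, i ∉ (S.erase i).erase j := fun S h => by simp at h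
  have hj : ∀ S : Finset E, j ∉ (S.erase i).erase j := fun S => notMem_erase j _
  have expand : ∀ a b : ℝ, multilinearExt f (update (update y i a) j b)
      = (1 - b) * ((1 - a) * u₀₀ + a * u₁₀) + b * ((1 - a) * u₀₁ + a * u₁₁) := by
    have e₁₀ : ∀ S : Finset E, (insert i S).erase j = insert i ((S.erase i).erase j) := by
      intro S; ext k; grind
    have e₀₁ : ∀ S : Finset E, insert j (S.erase i) = insert j ((S.erase i).erase j) := by
      intro S; ext k; grind
    have e₁₁ : ∀ S : Finset E,
        insert j (insert i S) = insert i (insert j ((S.erase i).erase j)) := by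
      intro S; ext k; grind
    intro a b
    simp only [multilinearExt_update, e₁₀, e₀₁, e₁₁]
    rfl
  have hu₁₀ : u₁₀ = u₀₁ := congrArg (multilinearExt · y) (funext fun S => hsymm _ (hi S) (hj S))
  have hu : u₁₁ + u₀₀ ≤ u₁₀ + u₀₁ := by
    simp only [u₀₀, u₁₀, u₀₁, u₁₁, ← multilinearExt_add]
    exact multilinearExt_mono (fun S => hsub _ (hi S) (hj S)) hy
  have hy_eq := expand (y i) (y j)
  rw [update_eq_self, update_eq_self] at hy_eq
  rw [expand, hy_eq, ← hu₁₀]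
  have hD := mul_nonpos_of_nonneg_of_nonpos (sub_nonneg.2 hprod) (sub_nonpos.2 hu)
  rw [← hu₁₀] at hD
  linear_combination hD + (u₁₀ - u₀₀) * hsum

end MultilinearExtension

theorem exists_lt_of_sum_eq_card_mul {ι : Type*} {s : Finset ι} {y : ι → ℝ} {a : ℝ}
    (hsum : ∑ k ∈ s, y k = #s * a) (hne : ∃ k ∈ s, y k ≠ a) : ∃ i ∈ s, a < y i := by
  by_contra! h
  obtain ⟨k, hk, hka⟩ := hne
  have := sum_lt_sum h ⟨k, hk, lt_of_le_of_ne (h k hk) hka⟩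
  simp [hsum] at this

theorem sum_update_update_of_add_eq {ι : Type*} [DecidableEq ι] {s : Finset ι} {i j : ι}
    (hi : i ∈ s) (hj : j ∈ s) (hij : i ≠ j) (y : ι → ℝ) {p q : ℝ} (hpq : p + q = y i + y j) :
    ∑ k ∈ s, update (update y i p) j q k = ∑ k ∈ s, y k := by
  have hj' : j ∈ s.erase i := mem_erase.2 ⟨hij.symm, hj⟩
  rw [← add_sum_erase _ _ hi, ← add_sum_erase _ _ hj', ← add_sum_erase _ _ hi,
    ← add_sum_erase _ _ hj', update_self, update_of_ne hij, update_self,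
    sum_congr rfl fun k hk => by
      rw [update_of_ne (ne_of_mem_erase hk), update_of_ne (ne_of_mem_erase (mem_of_mem_erase hk))]]
  linarith

theorem apply_averaged_le_of_transfer_le {ι : Type*} [DecidableEq ι] {G : (ι → ℝ) → ℝ}
    {s : Finset ι} {a : ℝ}
    (htransfer : ∀ y : ι → ℝ, (∀ k, y k ∈ Set.Icc 0 1) → ∀ i ∈ s, ∀ j ∈ s, y j < a → a < y i →
      G (update (update y i a) j (y i + y j - a)) ≤ G y)
    {y : ι → ℝ} (hy : ∀ k, y k ∈ Set.Icc 0 1) (hsum : ∑ k ∈ s, y k = #s * a) :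
    G (fun k => if k ∈ s then a else y k) ≤ G y := by
  induction hn : #{k ∈ s | y k ≠ a} using Nat.strong_induction_on generalizing y with
  | _ n ih =>
  by_cases hconst : ∀ k ∈ s, y k = a
  · refine le_of_eq (congrArg G (funext fun k => ?_))
    split_ifs with hk
    exacts [(hconst k hk).symm, rfl]
  push Not at hconst
  obtain ⟨i, hi, hai⟩ := exists_lt_of_sum_eq_card_mul hsum hconst
  obtain ⟨j, hj, hja⟩ : ∃ j ∈ s, y j < a := by
    have := exists_lt_of_sum_eq_card_mul (s := s) (y := fun k => -y k) (a := -a)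
      (by rw [sum_neg_distrib, hsum]; ring) (by simpa using hconst)
    simpa using this
  have hij : i ≠ j := by rintro rfl; linarith
  set y' := update (update y i a) j (y i + y j - a) with hy'
  have hy'i : y' i = a := by simp [y', hij]
  have hy'j : y' j = y i + y j - a := by simp [y']
  have hy'k : ∀ k, k ≠ i → k ≠ j → y' k = y k := fun k hki hkj => by simp [y', hki, hkj]
  have hbox : ∀ k, y' k ∈ Set.Icc 0 1 := by
    intro k
    by_cases hki : k = i
    · rw [hki, hy'i]; constructor <;> linarith [(hy i).2, (hy j).1]
    by_cases hkj : k = j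
    · rw [hkj, hy'j]; constructor <;> linarith [(hy i).2, (hy j).1]
    rw [hy'k k hki hkj]; exact hy k
  have hsum' : ∑ k ∈ s, y' k = #s * a := by
    rw [hy', sum_update_update_of_add_eq hi hj hij y (by ring), hsum]
  have hfewer : #{k ∈ s | y' k ≠ a} < n := by
    rw [← hn]
    refine card_lt_card ((ssubset_iff_of_subset fun k hk => ?_).2 ⟨i, ?_, ?_⟩)
    · simp only [mem_filter] at hk ⊢
      refine ⟨hk.1, fun hka => hk.2 ?_⟩
      by_cases hki : k = i
      · rw [hki, hy'i]
      by_cases hkj : k = j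
      · rw [hkj] at hka; linarith
      rwa [hy'k k hki hkj]
    · simp [hi, hai.ne']
    · simp [hy'i]
  have htarget : (fun k => if k ∈ s then a else y' k) = fun k => if k ∈ s then a else y k := by
    funext k
    split_ifs with hk
    · rfl
    · exact hy'k k (fun h => hk (h ▸ hi)) (fun h => hk (h ▸ hj))
  calc G (fun k => if k ∈ s then a else y k) = G (fun k => if k ∈ s then a else y' k) := by
        rw [htarget]
    _ ≤ G y' := ih _ hfewer hbox hsum' rfl
    _ ≤ G y := htransfer y hy i hi j hj hja hai

theorem card_insert_inter_of_mem {E : Type*} [DecidableEq E] {E' T : Finset E} {i : E}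
    (hi : i ∈ E') (hiT : i ∉ T) : #(insert i T ∩ E') = #(T ∩ E') + 1 := by
  rw [insert_inter_of_mem hi, card_insert_of_notMem fun h => hiT (mem_inter.1 h).1]

theorem multilinearExt_ge_symmetrized_general {E : Type*} [Fintype E] (E' : Finset E)
    (φ : ℕ → ℝ)
    (hconc : ∀ i, φ (i + 2) - φ (i + 1) ≤ φ (i + 1) - φ i)
    (x : E → ℝ) (hx : ∀ i, 0 ≤ x i ∧ x i ≤ 1) :
    multilinearExt (fun S : Finset E => φ ((S ∩ E').card))
        (fun i => if i ∈ E' then (∑ j ∈ E', x j) / (E'.card : ℝ) else x i)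
      ≤ multilinearExt (fun S : Finset E => φ ((S ∩ E').card)) x := by
  refine apply_averaged_le_of_transfer_le (fun y hy i hi j hj hja hai => ?_) hx ?_
  · have hij : i ≠ j := by rintro rfl; linarith
    refine multilinearExt_update_update_le hij (fun T hiT hjT => ?_) (fun T hiT hjT => ?_) hy
      (by ring) (by nlinarith)
    · rw [card_insert_inter_of_mem hi hiT, card_insert_inter_of_mem hj hjT]
    · rw [card_insert_inter_of_mem hi (by simp [hij, hiT]), card_insert_inter_of_mem hj hjT,
        card_insert_inter_of_mem hi hiT]
      linarith [hconc #(T ∩ E')]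
  · rcases E'.eq_empty_or_nonempty with rfl | hne
    · simp
    · field_simp [card_pos.2 hne]

/-- For a nonempty `E' ⊆ E` and a normalized nondecreasing concave
`φ : ℕ → ℝ_{≥0}`, the multilinear extension of `f(S) = φ(|S ∩ E'|)` does not increase when
`x` is replaced by the point `x̄` obtained by averaging the coordinates of `x` on `E'`. -/
theorem multilinearExt_ge_symmetrized {E : Type*} [Fintype E] (E' : Finset E)
    (hE' : E'.Nonempty)
    (φ : ℕ → ℝ) (hnn : ∀ i, 0 ≤ φ i) (h0 : φ 0 = 0) (h1 : φ 1 = 1)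
    (hmono : ∀ i, φ i ≤ φ (i + 1))
    (hconc : ∀ i, φ (i + 2) - φ (i + 1) ≤ φ (i + 1) - φ i)
    (x : E → ℝ) (hx : ∀ i, 0 ≤ x i ∧ x i ≤ 1) :
    multilinearExt (fun S : Finset E => φ ((S ∩ E').card))
        (fun i => if i ∈ E' then (∑ j ∈ E', x j) / (E'.card : ℝ) else x i)
      ≤ multilinearExt (fun S : Finset E => φ ((S ∩ E').card)) x :=
  multilinearExt_ge_symmetrized_general E' φ hconc x hx
end

section
/- Let M = (E, I) be a matroid on a finite ground set with rank function r, and let w ∈ ℝ_{≥0}^E. Then for every x ∈ [0,1]^E, the concave extension of the weighted rank function r_w satisfies r̂_w(x) = max{ wᵀy : y ∈ P(r), y ≤ x }, where P(r) = { y ∈ ℝ_{≥0}^E : y(S) ≤ r(S) for all S ⊆ E } is the independent set polytope. -/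
open scoped BigOperators Classical

/-!
For `≤`: replace each set `S` in a distribution with marginals `x` by a maximum-weight independent
subset of `S`; the new marginal vector lies in `P(r)`, is at most `x`, and its `w`-weight is the
value of the distribution.

For `≥`: every extreme point of `P(r)` is the indicator of an independent set (at an extreme point
with a fractional coordinate, uncrossing the tight sets yields a perturbation direction `e` or
`e - f` that keeps all tight constraints tight), so by Krein–Milman each `y ∈ P(r)` is the
marginal vector of a distribution on independent sets `T`. Adding to `T` an independent random
set containing `i` with probability `(x i - y i) / (1 - y i)` raises the marginals to `x`, and the
resulting set `U ⊇ T` has `r_w(U) ≥ w(T)`.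
-/

open Finset Filter Topology

theorem exists_sum_eq_natCast {E : Type*} {A : Finset E} {z : E → ℝ}
    (h : ∀ i ∈ A, z i = 0 ∨ z i = 1) : ∃ n : ℕ, ∑ i ∈ A, z i = n :=
  sum_induction z (fun a => ∃ n : ℕ, a = n)
    (fun _ _ ⟨m, hm⟩ ⟨n, hn⟩ => ⟨m + n, by rw [hm, hn, Nat.cast_add]⟩) ⟨0, Nat.cast_zero.symm⟩
    fun i hi => (h i hi).elim (fun h0 => ⟨0, by simp [h0]⟩) fun h1 => ⟨1, by simp [h1]⟩

theorem eventually_add_mul_le {a b c : ℝ} (hac : a ≤ c) (hb : a = c → b = 0) :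
    ∀ᶠ ε in 𝓝 (0 : ℝ), a + ε * b ≤ c := by
  rcases hac.eq_or_lt with rfl | hlt
  · exact Eventually.of_forall fun ε => by simp [hb rfl]
  · refine (Tendsto.eventually_lt_const hlt ?_).mono fun _ => le_of_lt
    exact (by fun_prop : Continuous fun ε : ℝ => a + ε * b).tendsto' 0 a (by simp)

theorem add_one_sub_mul_div_one_sub {m x : ℝ} (hmx : m ≤ x) (hx : x ≤ 1) :
    m + (1 - m) * ((x - m) / (1 - m)) = x := by
  rcases (hmx.trans hx).eq_or_lt with rfl | hm
  · simp [le_antisymm hx hmx]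
  · rw [mul_div_cancel₀ _ (sub_ne_zero.2 hm.ne')]
    ring

section Marginal

variable {E ι : Type*} [Fintype ι]

/-- The marginal vector `i ↦ ℙ(i ∈ T)` of the random set that equals `T k` with weight `μ k`. -/
noncomputable def marginal (μ : ι → ℝ) (T : ι → Finset E) (i : E) : ℝ :=
  ∑ k ∈ univ.filter (fun k => i ∈ T k), μ k

variable {μ : ι → ℝ} {T : ι → Finset E}

theorem marginal_nonneg (hμ : ∀ k, 0 ≤ μ k) (i : E) : 0 ≤ marginal μ T i :=
  sum_nonneg fun k _ => hμ k

theorem marginal_mono {U : ι → Finset E} (hμ : ∀ k, 0 ≤ μ k) (hTU : ∀ k, T k ⊆ U k) (i : E) :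
    marginal μ T i ≤ marginal μ U i :=
  sum_le_sum_of_subset_of_nonneg (monotone_filter_right _ fun k _ hk => hTU k hk)
    fun k _ _ => hμ k

theorem sum_mul_marginal (w : E → ℝ) (A : Finset E) :
    ∑ i ∈ A, w i * marginal μ T i = ∑ k, μ k * ∑ i ∈ A ∩ T k, w i := by
  simp only [marginal, sum_filter, mul_sum, mul_ite, mul_zero]
  rw [sum_comm]
  refine sum_congr rfl fun k _ => ?_
  rw [sum_ite_mem]
  exact sum_congr rfl fun i _ => mul_comm _ _

theorem exists_pushforward_distrib [Fintype E] (hμ0 : ∀ k, 0 ≤ μ k) (hμ1 : ∑ k, μ k = 1)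
    (T : ι → Finset E) :
    ∃ lam : Finset E → ℝ, (∀ S, 0 ≤ lam S) ∧ ∑ S, lam S = 1 ∧ marginal lam id = marginal μ T ∧
      ∀ f : Finset E → ℝ, ∑ S, lam S * f S = ∑ k, μ k * f (T k) := by
  have hpush : ∀ f : Finset E → ℝ,
      ∑ S, (∑ k ∈ univ.filter (T · = S), μ k) * f S = ∑ k, μ k * f (T k) := by
    intro f
    simp only [sum_mul]
    rw [← sum_fiberwise univ T fun k => μ k * f (T k)]
    exact sum_congr rfl fun S _ => sum_congr rfl fun k hk => by rw [(mem_filter.1 hk).2]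
  refine ⟨_, fun S => sum_nonneg fun k _ => hμ0 k, by simpa [hμ1] using hpush 1,
    funext fun i => ?_, hpush⟩
  simpa [marginal, sum_filter] using hpush fun S => if i ∈ S then 1 else 0

end Marginal

section BernoulliSet

variable {E : Type*} [Fintype E]

/-- The law of the random set that contains each `i` independently with probability `p i`. -/
noncomputable def bernoulliWeight (p : E → ℝ) (V : Finset E) : ℝ :=
  (∏ i ∈ V, p i) * ∏ i ∈ Vᶜ, (1 - p i)

variable {p : E → ℝ}

theorem bernoulliWeight_nonneg (hp0 : ∀ i, 0 ≤ p i) (hp1 : ∀ i, p i ≤ 1) (V : Finset E) :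
    0 ≤ bernoulliWeight p V :=
  mul_nonneg (prod_nonneg fun i _ => hp0 i) (prod_nonneg fun i _ => sub_nonneg.2 (hp1 i))

theorem sum_bernoulliWeight (p : E → ℝ) : ∑ V, bernoulliWeight p V = 1 := by
  simp [bernoulliWeight, ← Fintype.prod_add]

theorem marginal_bernoulliWeight (p : E → ℝ) (i : E) :
    marginal (bernoulliWeight p) id i = p i := by
  -- Killing the factor `1 - p i` restricts the expansion of `∏ j, (p j + (1 - p j))` to `V ∋ i`.
  have hkill : ∀ V : Finset E, (if i ∈ V then bernoulliWeight p V else 0) =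
      (∏ j ∈ V, p j) * ∏ j ∈ Vᶜ, (if j = i then 0 else 1 - p j) := by
    intro V
    by_cases hiV : i ∈ V
    · rw [if_pos hiV, bernoulliWeight]
      exact congrArg _ <| prod_congr rfl fun j hj =>
        (if_neg (by rintro rfl; exact (mem_compl.1 hj) hiV)).symm
    · rw [if_neg hiV, prod_eq_zero (mem_compl.2 hiV) (by simp), mul_zero]
  rw [marginal, sum_filter]
  simp only [id, hkill, ← Fintype.prod_add]
  rw [← Fintype.prod_ite_eq' i p]
  exact prod_congr rfl fun j _ => by split_ifs <;> ring

variable {ι : Type*} [Fintype ι] {μ : ι → ℝ} {T : ι → Finset E}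

theorem marginal_union_bernoulliWeight (hμ : ∑ k, μ k = 1) (p : E → ℝ) (i : E) :
    marginal (fun kV : ι × Finset E => μ kV.1 * bernoulliWeight p kV.2)
        (fun kV => T kV.1 ∪ kV.2) i =
      marginal μ T i + (1 - marginal μ T i) * p i := by
  have hinner : ∀ k, ∑ V, (if i ∈ T k ∪ V then μ k * bernoulliWeight p V else 0) =
      if i ∈ T k then μ k else μ k * p i := by
    intro k
    split_ifs with hik
    · simp [hik, ← mul_sum, sum_bernoulliWeight]
    · rw [← marginal_bernoulliWeight p i, marginal, sum_filter, mul_sum]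
      simp [hik, mul_ite]
  have hcompl : 1 - marginal μ T i = ∑ k, if i ∈ T k then 0 else μ k := by
    rw [← hμ, marginal, sum_filter, ← sum_sub_distrib]
    exact sum_congr rfl fun k _ => by split_ifs <;> ring
  rw [hcompl, marginal, sum_filter, Fintype.sum_prod_type, marginal, sum_filter, sum_mul,
    ← sum_add_distrib]
  simp only [hinner]
  exact sum_congr rfl fun k _ => by split_ifs <;> ring

theorem exists_marginal_union_eq (hμ0 : ∀ k, 0 ≤ μ k) (hμ1 : ∑ k, μ k = 1) {x : E → ℝ}
    (hmx : ∀ i, marginal μ T i ≤ x i) (hx1 : ∀ i, x i ≤ 1) :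
    ∃ ν : ι × Finset E → ℝ, (∀ kV, 0 ≤ ν kV) ∧ (∀ k, ∑ V, ν (k, V) = μ k) ∧
      marginal ν (fun kV => T kV.1 ∪ kV.2) = x := by
  set p : E → ℝ := fun i => (x i - marginal μ T i) / (1 - marginal μ T i)
  have hp0 : ∀ i, 0 ≤ p i := fun i =>
    div_nonneg (sub_nonneg.2 (hmx i)) (sub_nonneg.2 ((hmx i).trans (hx1 i)))
  have hp1 : ∀ i, p i ≤ 1 := fun i =>
    div_le_one_of_le₀ (by linarith [hx1 i]) (sub_nonneg.2 ((hmx i).trans (hx1 i)))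
  refine ⟨fun kV => μ kV.1 * bernoulliWeight p kV.2,
    fun kV => mul_nonneg (hμ0 _) (bernoulliWeight_nonneg hp0 hp1 _), ?_, funext fun i => ?_⟩
  · simp [← mul_sum, sum_bernoulliWeight]
  · rw [marginal_union_bernoulliWeight hμ1]
    exact add_one_sub_mul_div_one_sub (hmx i) (hx1 i)

end BernoulliSet

namespace FinMatroid

variable {E : Type*} (M : FinMatroid E)

theorem card_le_rank {S T : Finset E} (hT : M.Indep T) (hTS : T ⊆ S) : T.card ≤ M.rank S :=
  le_sup (mem_filter.2 ⟨mem_powerset.2 hTS, hT⟩)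

theorem rank_le_card (S : Finset E) : M.rank S ≤ S.card :=
  Finset.sup_le fun _ hT => card_le_card (mem_powerset.1 (mem_filter.1 hT).1)

theorem exists_indep_subset_card_eq_rank (S : Finset E) :
    ∃ T ⊆ S, M.Indep T ∧ T.card = M.rank S := by
  obtain ⟨T, hT, hTS⟩ :=
    exists_mem_eq_sup _ ⟨∅, mem_filter.2 ⟨empty_mem_powerset S, M.indep_empty⟩⟩ card
  rw [mem_filter, mem_powerset] at hT
  exact ⟨T, hT.1, hT.2, hTS.symm⟩

theorem exists_indep_superset_card_eq_rank {B S : Finset E} (hB : M.Indep B) (hBS : B ⊆ S) :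
    ∃ T, B ⊆ T ∧ T ⊆ S ∧ M.Indep T ∧ T.card = M.rank S := by
  obtain ⟨T, hT, hmax⟩ := exists_max_image (S.powerset.filter fun T => B ⊆ T ∧ M.Indep T) card
    ⟨B, mem_filter.2 ⟨mem_powerset.2 hBS, subset_rfl, hB⟩⟩
  simp only [mem_filter, mem_powerset] at hT hmax
  obtain ⟨hTS, hBT, hTi⟩ := hT
  refine ⟨T, hBT, hTS, hTi, (M.card_le_rank hTi hTS).antisymm (not_lt.1 fun hlt => ?_)⟩
  obtain ⟨T₀, hT₀S, hT₀i, hT₀⟩ := M.exists_indep_subset_card_eq_rank S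
  obtain ⟨i, hiT₀, hiT, hins⟩ := M.indep_aug hTi hT₀i (hT₀ ▸ hlt)
  have := hmax (insert i T) ⟨insert_subset (hT₀S hiT₀) hTS, hBT.trans (subset_insert i T), hins⟩
  rw [card_insert_of_notMem hiT] at this
  omega

theorem indep_of_card_le_rank {S : Finset E} (h : S.card ≤ M.rank S) : M.Indep S := by
  obtain ⟨T, hTS, hT, hTc⟩ := M.exists_indep_subset_card_eq_rank S
  rwa [eq_of_subset_of_card_le hTS (hTc ▸ h)] at hT

theorem rank_union_add_rank_inter_le (A B : Finset E) :
    M.rank (A ∪ B) + M.rank (A ∩ B) ≤ M.rank A + M.rank B := by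
  obtain ⟨C, hCAB, hC, hCc⟩ := M.exists_indep_subset_card_eq_rank (A ∩ B)
  obtain ⟨D, hCD, hDAB, hD, hDc⟩ :=
    M.exists_indep_superset_card_eq_rank hC (hCAB.trans inter_subset_union)
  have hA := M.card_le_rank (M.indep_subset hD inter_subset_left)
    (inter_subset_right (s₁ := D) (s₂ := A))
  have hB := M.card_le_rank (M.indep_subset hD inter_subset_left)
    (inter_subset_right (s₁ := D) (s₂ := B))
  have hC' : C.card ≤ (D ∩ A ∩ (D ∩ B)).card :=
    card_le_card fun i hi => by simp [hCD hi, mem_inter.1 (hCAB hi)]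
  have hunion : D ∩ A ∪ D ∩ B = D := by rw [← inter_union_distrib_left, inter_eq_left.2 hDAB]
  have := card_union_add_card_inter (D ∩ A) (D ∩ B)
  rw [hunion] at this
  omega

section WeightedRank

variable (w : E → ℝ)

theorem finite_wRank_values (S : Finset E) :
    {v : ℝ | ∃ T : Finset E, T ⊆ S ∧ M.Indep T ∧ v = ∑ i ∈ T, w i}.Finite :=
  (S.powerset.image fun T => ∑ i ∈ T, w i).finite_toSet.subset
    fun _ ⟨T, hTS, _, hv⟩ => mem_image.2 ⟨T, mem_powerset.2 hTS, hv.symm⟩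

theorem sum_le_wRank {S T : Finset E} (hT : M.Indep T) (hTS : T ⊆ S) :
    ∑ i ∈ T, w i ≤ M.wRank w S :=
  le_csSup (M.finite_wRank_values w S).bddAbove ⟨T, hTS, hT, rfl⟩

theorem exists_indep_subset_wRank_eq (S : Finset E) :
    ∃ T ⊆ S, M.Indep T ∧ M.wRank w S = ∑ i ∈ T, w i :=
  Set.Nonempty.csSup_mem (by exact ⟨_, ∅, empty_subset S, M.indep_empty, rfl⟩)
    (M.finite_wRank_values w S)

end WeightedRank

def indepPolytope : Set (E → ℝ) :=
  {y | (∀ i, 0 ≤ y i) ∧ ∀ S : Finset E, ∑ i ∈ S, y i ≤ M.rank S}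

variable {M}

theorem le_one_of_mem_indepPolytope {y : E → ℝ} (hy : y ∈ M.indepPolytope) (i : E) :
    y i ≤ 1 := by
  simpa using (hy.2 {i}).trans (Nat.cast_le.2 ((M.rank_le_card {i}).trans_eq (card_singleton i)))

theorem eq_zero_or_eq_one_of_notMem_Ioo {z : E → ℝ} (hz : z ∈ M.indepPolytope) {i : E}
    (hi : z i ∉ Set.Ioo 0 1) : z i = 0 ∨ z i = 1 := by
  rcases (hz.1 i).eq_or_lt with h | h
  · exact Or.inl h.symm
  · exact Or.inr ((le_one_of_mem_indepPolytope hz i).antisymm (not_lt.1 fun h' => hi ⟨h, h'⟩))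

theorem convex_indepPolytope : Convex ℝ M.indepPolytope := by
  rintro y ⟨hy0, hyr⟩ z ⟨hz0, hzr⟩ a b ha hb hab
  refine ⟨fun i => ?_, fun S => ?_⟩
  · simp only [Pi.add_apply, Pi.smul_apply, smul_eq_mul]
    have := hy0 i
    have := hz0 i
    positivity
  · simp only [Pi.add_apply, Pi.smul_apply, smul_eq_mul, sum_add_distrib, ← mul_sum]
    calc a * ∑ i ∈ S, y i + b * ∑ i ∈ S, z i ≤ a * M.rank S + b * M.rank S := by
          gcongr
          exacts [hyr S, hzr S]
      _ = M.rank S := by rw [← add_mul, hab, one_mul]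

theorem isClosed_indepPolytope : IsClosed M.indepPolytope := by
  simp only [indepPolytope, Set.ofPred_and, Set.ofPred_forall]
  exact (isClosed_iInter fun i => isClosed_le continuous_const (continuous_apply i)).inter
    (isClosed_iInter fun S => isClosed_le (by fun_prop) continuous_const)

theorem isCompact_indepPolytope : IsCompact M.indepPolytope :=
  (isCompact_univ_pi fun _ => isCompact_Icc).of_isClosed_subset isClosed_indepPolytope
    fun _ hy i _ => ⟨hy.1 i, le_one_of_mem_indepPolytope hy i⟩

theorem marginal_mem_indepPolytope {ι : Type*} [Fintype ι] {μ : ι → ℝ} {T : ι → Finset E}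
    (hμ0 : ∀ k, 0 ≤ μ k) (hμ1 : ∑ k, μ k = 1) (hT : ∀ k, M.Indep (T k)) :
    marginal μ T ∈ M.indepPolytope := by
  refine ⟨marginal_nonneg hμ0, fun S => ?_⟩
  have hsum := sum_mul_marginal (μ := μ) (T := T) (fun _ => 1) S
  simp only [one_mul, sum_const, nsmul_one] at hsum
  calc ∑ i ∈ S, marginal μ T i = ∑ k, μ k * (S ∩ T k).card := hsum
    _ ≤ ∑ k, μ k * M.rank S := by
        gcongr with k
        · exact hμ0 k
        · exact M.card_le_rank (M.indep_subset (hT k) inter_subset_right) inter_subset_left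
    _ = M.rank S := by rw [← sum_mul, hμ1, one_mul]

theorem sum_inter_eq_rank_of_sum_eq_rank {z : E → ℝ} (hz : z ∈ M.indepPolytope)
    {S T : Finset E} (hS : ∑ i ∈ S, z i = M.rank S) (hT : ∑ i ∈ T, z i = M.rank T) :
    ∑ i ∈ S ∩ T, z i = M.rank (S ∩ T) := by
  have hsub : (M.rank (S ∪ T) : ℝ) + M.rank (S ∩ T) ≤ M.rank S + M.rank T := by
    exact_mod_cast M.rank_union_add_rank_inter_le S T
  linarith [hz.2 (S ∩ T), hz.2 (S ∪ T), sum_union_inter (s₁ := S) (s₂ := T) (f := z)]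

theorem exists_ne_mem_Ioo_of_sum_eq_rank {z : E → ℝ} (hz : z ∈ M.indepPolytope)
    {T : Finset E} (hT : ∑ i ∈ T, z i = M.rank T) {e : E} (heT : e ∈ T)
    (he : z e ∈ Set.Ioo 0 1) : ∃ f ∈ T, f ≠ e ∧ z f ∈ Set.Ioo 0 1 := by
  -- Otherwise `z e = r(T) - z(T \ {e})` would be an integer.
  by_contra! hint
  obtain ⟨n, hn⟩ := exists_sum_eq_natCast fun i hi =>
    eq_zero_or_eq_one_of_notMem_Ioo hz (hint i (mem_of_mem_erase hi) (ne_of_mem_erase hi))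
  rw [← add_sum_erase T z heT, hn] at hT
  have h₁ : n < M.rank T := by exact_mod_cast (show (n : ℝ) < M.rank T by linarith [he.1])
  have h₂ : M.rank T < n + 1 := by
    exact_mod_cast (show (M.rank T : ℝ) < n + 1 by linarith [he.2])
  omega

variable [Fintype E]

theorem eventually_add_smul_mem_indepPolytope {z d : E → ℝ} (hz : z ∈ M.indepPolytope)
    (hd0 : ∀ i, z i = 0 → d i = 0) (hdS : ∀ S, ∑ i ∈ S, z i = M.rank S → ∑ i ∈ S, d i = 0) :
    ∀ᶠ ε in 𝓝 (0 : ℝ), z + ε • d ∈ M.indepPolytope := by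
  have hcoord : ∀ i, ∀ᶠ ε in 𝓝 (0 : ℝ), 0 ≤ (z + ε • d) i := fun i => by
    filter_upwards [eventually_add_mul_le (a := -z i) (b := -d i) (c := 0)
      (by linarith [hz.1 i]) fun h => by simp [hd0 i (neg_eq_zero.1 h)]] with ε h
    simp only [Pi.add_apply, Pi.smul_apply, smul_eq_mul]
    linarith
  have hsum : ∀ S, ∀ᶠ ε in 𝓝 (0 : ℝ), ∑ i ∈ S, (z + ε • d) i ≤ M.rank S := fun S => by
    filter_upwards [eventually_add_mul_le (hz.2 S) (hdS S)] with ε h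
    simpa only [Pi.add_apply, Pi.smul_apply, smul_eq_mul, sum_add_distrib, ← mul_sum] using h
  exact (eventually_all.2 hcoord).and (eventually_all.2 hsum)

theorem notMem_extremePoints_of_perturb {z d : E → ℝ} (hz : z ∈ M.indepPolytope) (hd : d ≠ 0)
    (hd0 : ∀ i, z i = 0 → d i = 0) (hdS : ∀ S, ∑ i ∈ S, z i = M.rank S → ∑ i ∈ S, d i = 0) :
    z ∉ M.indepPolytope.extremePoints ℝ := by
  intro hext
  have hplus := eventually_add_smul_mem_indepPolytope hz hd0 hdS
  have hminus := eventually_add_smul_mem_indepPolytope (d := -d) hz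
    (fun i hi => by simp [hd0 i hi]) (fun S hS => by simp [hdS S hS])
  obtain ⟨ε, ⟨h₁, h₂⟩, hε⟩ :=
    (((hplus.and hminus).filter_mono nhdsWithin_le_nhds).and self_mem_nhdsWithin).exists
      (f := 𝓝[≠] (0 : ℝ))
  have hseg : z ∈ openSegment ℝ (z + ε • d) (z + ε • -d) :=
    ⟨1 / 2, 1 / 2, by norm_num, by norm_num, by norm_num, by
      ext i; simp only [Pi.add_apply, Pi.smul_apply, Pi.neg_apply, smul_eq_mul]; ring⟩
  have := hext.2 h₁ h₂ hseg
  rw [add_eq_left, smul_eq_zero] at this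
  exact this.elim hε hd

theorem exists_indep_eq_indicator_of_mem_extremePoints {z : E → ℝ}
    (hz : z ∈ M.indepPolytope.extremePoints ℝ) :
    ∃ T, M.Indep T ∧ z = (T : Set E).indicator 1 := by
  have hzP := hz.1
  suffices hint : ∀ i, z i ∉ Set.Ioo 0 1 by
    have h01 := fun i => eq_zero_or_eq_one_of_notMem_Ioo hzP (hint i)
    refine ⟨univ.filter (z · = 1), M.indep_of_card_le_rank ?_, funext fun i => ?_⟩
    · have := hzP.2 (univ.filter (z · = 1))
      rw [sum_congr rfl fun i hi => (mem_filter.1 hi).2, sum_const, nsmul_one] at this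
      exact_mod_cast this
    · rcases h01 i with h | h <;> simp [h]
  intro e₀ he₀
  by_cases htight : ∃ S, ∑ i ∈ S, z i = M.rank S ∧ ∃ e ∈ S, z e ∈ Set.Ioo 0 1
  · obtain ⟨T, hTmin⟩ := exists_minimal_of_wellFoundedLT
      (fun S => ∑ i ∈ S, z i = M.rank S ∧ ∃ e ∈ S, z e ∈ Set.Ioo 0 1) htight
    obtain ⟨hT, e, heT, he⟩ := hTmin.1
    -- Uncrossing `S` with the minimal tight set `T` gives a tight set `S ∩ T ⊆ T`.
    have hsub : ∀ g ∈ T, z g ∈ Set.Ioo 0 1 → ∀ S, ∑ i ∈ S, z i = M.rank S → g ∈ S → T ⊆ S :=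
      fun g hgT hg S hS hgS => inter_eq_right.1 <| hTmin.eq_of_le
        ⟨sum_inter_eq_rank_of_sum_eq_rank hzP hS hT, g, mem_inter.2 ⟨hgS, hgT⟩, hg⟩
        inter_subset_right
    obtain ⟨f, hfT, hfe, hf⟩ := exists_ne_mem_Ioo_of_sum_eq_rank hzP hT heT he
    refine notMem_extremePoints_of_perturb hzP (d := Pi.single e 1 - Pi.single f 1)
      (fun h => by simpa [hfe.symm] using congrFun h e) (fun i hi => ?_) (fun S hS => ?_) hz
    · have hie : i ≠ e := by rintro rfl; exact he.1.ne' hi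
      have hif : i ≠ f := by rintro rfl; exact hf.1.ne' hi
      simp [hie, hif]
    · have hef : e ∈ S ↔ f ∈ S :=
        ⟨fun h => hsub e heT he S hS h hfT, fun h => hsub f hfT hf S hS h heT⟩
      simp only [Pi.sub_apply]
      rw [sum_sub_distrib, sum_pi_single', sum_pi_single', if_congr hef rfl rfl, sub_self]
  · push Not at htight
    refine notMem_extremePoints_of_perturb hzP (d := Pi.single e₀ 1)
      (fun h => by simpa using congrFun h e₀) (fun i hi => ?_) (fun S hS => ?_) hz
    · have hie : i ≠ e₀ := by rintro rfl; exact he₀.1.ne' hi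
      simp [hie]
    · rw [sum_pi_single', if_neg fun h => htight S hS e₀ h he₀]

theorem exists_indep_family_marginal_eq {y : E → ℝ} (hy : y ∈ M.indepPolytope) :
    ∃ (ι : Type) (_ : Fintype ι) (μ : ι → ℝ) (T : ι → Finset E), (∀ k, 0 ≤ μ k) ∧
      ∑ k, μ k = 1 ∧ (∀ k, M.Indep (T k)) ∧ marginal μ T = y := by
  set s : Set (E → ℝ) := {v | ∃ T, M.Indep T ∧ v = (T : Set E).indicator 1}
  have hs : s.Finite := (Set.finite_range fun T : Finset E => (T : Set E).indicator 1).subset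
    fun _ ⟨T, _, hv⟩ => ⟨T, hv.symm⟩
  have hPs : M.indepPolytope ⊆ convexHull ℝ s :=
    calc M.indepPolytope = closure (convexHull ℝ (M.indepPolytope.extremePoints ℝ)) :=
          (closure_convexHull_extremePoints isCompact_indepPolytope convex_indepPolytope).symm
      _ ⊆ closure (convexHull ℝ s) := closure_mono <|
          convexHull_mono fun _ hz => exists_indep_eq_indicator_of_mem_extremePoints hz
      _ = convexHull ℝ s := (hs.isClosed_convexHull (𝕜 := ℝ)).closure_eq
  obtain ⟨ι, _, μ, v, hμ0, hμ1, hv, hvy⟩ := mem_convexHull_iff_exists_fintype.1 (hPs hy)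
  choose T hT hvT using hv
  refine ⟨ι, inferInstance, μ, T, hμ0, hμ1, hT, funext fun i => ?_⟩
  rw [← hvy, marginal, sum_filter]
  simp [hvT, Set.indicator_apply]

theorem exists_mem_indepPolytope_of_distrib (w : E → ℝ) {lam : Finset E → ℝ}
    (h0 : ∀ S, 0 ≤ lam S) (h1 : ∑ S, lam S = 1) :
    ∃ y ∈ M.indepPolytope, (∀ i, y i ≤ marginal lam id i) ∧
      ∑ i, w i * y i = ∑ S, lam S * M.wRank w S := by
  choose B hBS hB hwB using M.exists_indep_subset_wRank_eq w
  refine ⟨marginal lam B, marginal_mem_indepPolytope h0 h1 hB, marginal_mono h0 hBS, ?_⟩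
  simp [sum_mul_marginal, hwB]

theorem exists_distrib_ge_of_mem_indepPolytope (w : E → ℝ) {x y : E → ℝ}
    (hy : y ∈ M.indepPolytope) (hyx : ∀ i, y i ≤ x i) (hx : ∀ i, x i ≤ 1) :
    ∃ lam : Finset E → ℝ, (∀ S, 0 ≤ lam S) ∧ ∑ S, lam S = 1 ∧ marginal lam id = x ∧
      ∑ i, w i * y i ≤ ∑ S, lam S * M.wRank w S := by
  obtain ⟨ι, _, μ, T, hμ0, hμ1, hT, rfl⟩ := exists_indep_family_marginal_eq hy
  obtain ⟨ν, hν0, hνμ, hνx⟩ := exists_marginal_union_eq hμ0 hμ1 hyx hx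
  have hν1 : ∑ kV, ν kV = 1 := by simp [Fintype.sum_prod_type, hνμ, hμ1]
  obtain ⟨lam, h0, h1, hmarg, hlam⟩ := exists_pushforward_distrib hν0 hν1 fun kV => T kV.1 ∪ kV.2
  refine ⟨lam, h0, h1, hmarg.trans hνx, ?_⟩
  calc ∑ i, w i * marginal μ T i = ∑ kV : ι × Finset E, ν kV * ∑ i ∈ T kV.1, w i := by
        simp [sum_mul_marginal, Fintype.sum_prod_type, ← sum_mul, hνμ]
    _ ≤ ∑ kV : ι × Finset E, ν kV * M.wRank w (T kV.1 ∪ kV.2) :=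
        sum_le_sum fun kV _ => mul_le_mul_of_nonneg_left
          (M.sum_le_wRank w (hT kV.1) subset_union_left) (hν0 kV)
    _ = ∑ S, lam S * M.wRank w S := (hlam _).symm

end FinMatroid

theorem concaveExt_wRank_eq_max_over_polytope_general {E : Type*} [Fintype E] (M : FinMatroid E)
    (w : E → ℝ)
    (x : E → ℝ) (hx : ∀ i, 0 ≤ x i ∧ x i ≤ 1) :
    concaveExt (M.wRank w) x =
      sSup { v : ℝ | ∃ y : E → ℝ, (∀ i, 0 ≤ y i) ∧
        (∀ S : Finset E, (∑ i ∈ S, y i) ≤ (M.rank S : ℝ)) ∧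
        (∀ i, y i ≤ x i) ∧ v = ∑ i : E, w i * y i } := by
  refine csSup_eq_csSup_of_forall_exists_le ?_ ?_
  · rintro _ ⟨lam, h0, h1, hmarg, rfl⟩
    obtain ⟨y, hy, hyx, hwy⟩ := M.exists_mem_indepPolytope_of_distrib w h0 h1
    exact ⟨_, ⟨y, hy.1, hy.2, fun i => (hyx i).trans_eq (hmarg i), hwy.symm⟩, le_rfl⟩
  · rintro _ ⟨y, hy0, hyr, hyx, rfl⟩
    obtain ⟨lam, h0, h1, hmarg, hle⟩ :=
      M.exists_distrib_ge_of_mem_indepPolytope w ⟨hy0, hyr⟩ hyx fun i => (hx i).2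
    exact ⟨_, ⟨lam, h0, h1, congrFun hmarg, rfl⟩, hle⟩

/-- For a matroid with rank function `r` and nonnegative weights `w`, the
concave extension of the weighted rank function satisfies
`r̂_w(x) = max{ wᵀy : y ∈ P(r), y ≤ x }`, where `P(r)` is the independent set polytope. -/
theorem concaveExt_wRank_eq_max_over_polytope {E : Type*} [Fintype E] (M : FinMatroid E)
    (w : E → ℝ) (hw : ∀ i, 0 ≤ w i)
    (x : E → ℝ) (hx : ∀ i, 0 ≤ x i ∧ x i ≤ 1) :
    concaveExt (M.wRank w) x =
      sSup { v : ℝ | ∃ y : E → ℝ, (∀ i, 0 ≤ y i) ∧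
        (∀ S : Finset E, (∑ i ∈ S, y i) ≤ (M.rank S : ℝ)) ∧
        (∀ i, y i ≤ x i) ∧ v = ∑ i : E, w i * y i } :=
  concaveExt_wRank_eq_max_over_polytope_general M w x hx
end
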